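/- Let μ be a probability measure on ℝ^d with finite first moment, and E : ℝ^d → ℝ continuous with a global minimizer x̄. Assume the inverse continuity conditions: there are η, ν, R₀, E∞ > 0 with η|x - x̄| ≤ |E(x) - E(x̄)|^ν for all x ∈ B_{R₀}(x̄), and E(x) - E(x̄) > E∞ for all x ∉ B_{R₀}(x̄). Fix 0 < q ≤ E∞/2 and r ∈ (0, R₀] with sup_{x ∈ B_r(x̄)} |E(x) - E(x̄)| ≤ q. Then the Gibbs-weighted mean X_α = (∫ x e^{-αE} dμ)/(∫ e^{-αE} dμ) satisfies |x̄ - X_α| ≤ (2q)^ν/η + (exp(-αq)/μ(B_r(x̄))) · ∫ |x - x̄| μ(dx), provided μ(B_r(x̄)) > 0. -/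

import Mathlib

/-!
With the Gibbs weight `w = exp (-α E)` and `a = (2q)^ν / η`, one has pointwise
`w x ‖x - x̄‖ ≤ a w x + exp (-α (E x̄ + 2q)) ‖x - x̄‖`: inside the ball of radius `a` trivially,
and outside it because there `E x - E x̄ > 2q`, by inverse continuity on `B_{R₀}(x̄)` and by the
separation `E∞ ≥ 2q` off it. Integrating, and bounding the normalisation from below by
`∫ w ≥ exp (-α (E x̄ + q)) μ(B_r(x̄))`, the two exponentials leave the factor `exp (-α q)`.
-/

open MeasureTheory

theorem lt_sub_of_rpow_div_lt_norm_sub {X : Type*} [SeminormedAddCommGroup X] {E : X → ℝ}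
    {x₀ x : X} {K : Set X} {η ν s Einf : ℝ}
    (hη : 0 < η) (hν : 0 ≤ ν) (hmin : ∀ x, E x₀ ≤ E x)
    (hinv : ∀ x ∈ K, η * ‖x - x₀‖ ≤ |E x - E x₀| ^ ν) (hfar : ∀ x ∉ K, Einf < E x - E x₀)
    (hsE : s ≤ Einf) (hx : s ^ ν / η < ‖x - x₀‖) : s < E x - E x₀ := by
  by_contra! hle
  by_cases hxK : x ∈ K
  · have hE0 : 0 ≤ E x - E x₀ := sub_nonneg.2 (hmin x)
    have : η * ‖x - x₀‖ ≤ s ^ ν := (hinv x hxK).trans <| by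
      rw [abs_of_nonneg hE0]; exact Real.rpow_le_rpow hE0 hle hν
    rw [div_lt_iff₀ hη] at hx
    linarith
  · linarith [hfar x hxK]

theorem isClosed_setOf_forall_abs_sub_le {ι : Type*} (x₀ : EuclideanSpace ℝ ι) (r : ℝ) :
    IsClosed {x : EuclideanSpace ℝ ι | ∀ k, |x k - x₀ k| ≤ r} := by
  rw [Set.ofPred_forall]
  exact isClosed_iInter fun k => isClosed_le (by fun_prop) continuous_const

theorem mul_le_add_mul_of_lt_imp_le {w f a c : ℝ} (hw : 0 ≤ w) (hf : 0 ≤ f) (ha : 0 ≤ a)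
    (hc : 0 ≤ c) (htail : a < f → w ≤ c) : w * f ≤ a * w + c * f := by
  rcases le_or_gt f a with hfa | haf
  · nlinarith
  · nlinarith [htail haf]

theorem exp_neg_mul_mul_measureReal_le_integral {X : Type*} [MeasurableSpace X] {μ : Measure X}
    {E : X → ℝ} {s : Set X} {α m : ℝ} (hα : 0 ≤ α) (hs : MeasurableSet s) (hμs : μ s ≠ ⊤)
    (hE : ∀ x ∈ s, E x ≤ m) (hint : Integrable (fun x => Real.exp (-α * E x)) μ) :
    Real.exp (-α * m) * μ.real s ≤ ∫ x, Real.exp (-α * E x) ∂μ :=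
  calc _ ≤ ∫ x in s, Real.exp (-α * E x) ∂μ :=
        setIntegral_ge_of_const_le_real hs hμs
          (fun x hx => Real.exp_le_exp.2 (by nlinarith [hE x hx])) hint.integrableOn
    _ ≤ _ := setIntegral_le_integral hint (.of_forall fun _ => (Real.exp_pos _).le)

section WeightedMean

variable {X : Type*} [NormedAddCommGroup X] [NormedSpace ℝ X] [CompleteSpace X]
  [MeasurableSpace X]

noncomputable def weightedMean (μ : Measure X) (w : X → ℝ) : X :=
  (∫ x, w x ∂μ)⁻¹ • ∫ x, w x • x ∂μ

theorem norm_sub_weightedMean_le {μ : Measure X} {w : X → ℝ} (x₀ : X) (hw : 0 ≤ w)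
    (hwi : Integrable w μ) (hwxi : Integrable (fun x => w x • x) μ) (hI : ∫ x, w x ∂μ ≠ 0) :
    ‖x₀ - weightedMean μ w‖ ≤ (∫ x, w x * ‖x - x₀‖ ∂μ) / ∫ x, w x ∂μ := by
  have hmean : x₀ - weightedMean μ w = (∫ x, w x ∂μ)⁻¹ • ∫ x, w x • (x₀ - x) ∂μ := by
    simp only [smul_sub]
    rw [integral_sub (hwi.smul_const x₀) hwxi, integral_smul_const, smul_sub, smul_smul,
      inv_mul_cancel₀ hI, one_smul, weightedMean]
  have hnorm : ‖∫ x, w x • (x₀ - x) ∂μ‖ ≤ ∫ x, w x * ‖x - x₀‖ ∂μ := by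
    refine (norm_integral_le_integral_norm _).trans_eq (integral_congr_ae ?_)
    filter_upwards with x
    rw [norm_smul, Real.norm_of_nonneg (hw x), norm_sub_rev]
  rw [hmean, norm_smul, norm_inv, Real.norm_of_nonneg (integral_nonneg hw), inv_mul_eq_div]
  exact div_le_div_of_nonneg_right hnorm (integral_nonneg hw)

theorem norm_sub_weightedMean_le_add {μ : Measure X} {w : X → ℝ} {x₀ : X} {a c : ℝ}
    (hw : 0 ≤ w) (hwi : Integrable w μ) (hwxi : Integrable (fun x => w x • x) μ)
    (hI : 0 < ∫ x, w x ∂μ) (hmom : Integrable (fun x => ‖x - x₀‖) μ) (ha : 0 ≤ a) (hc : 0 ≤ c)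
    (htail : ∀ x, a < ‖x - x₀‖ → w x ≤ c) :
    ‖x₀ - weightedMean μ w‖ ≤ a + c / (∫ x, w x ∂μ) * ∫ x, ‖x - x₀‖ ∂μ := by
  have hsplit : ∫ x, w x * ‖x - x₀‖ ∂μ ≤ a * ∫ x, w x ∂μ + c * ∫ x, ‖x - x₀‖ ∂μ := by
    rw [← integral_const_mul, ← integral_const_mul, ← integral_add (hwi.const_mul a)
      (hmom.const_mul c)]
    refine integral_mono_of_nonneg (.of_forall fun x => mul_nonneg (hw x) (norm_nonneg _))
      ((hwi.const_mul a).add (hmom.const_mul c)) (.of_forall fun x => ?_)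
    exact mul_le_add_mul_of_lt_imp_le (hw x) (norm_nonneg _) ha hc (htail x)
  calc ‖x₀ - weightedMean μ w‖ ≤ (∫ x, w x * ‖x - x₀‖ ∂μ) / ∫ x, w x ∂μ :=
        norm_sub_weightedMean_le x₀ hw hwi hwxi hI.ne'
    _ ≤ (a * ∫ x, w x ∂μ + c * ∫ x, ‖x - x₀‖ ∂μ) / ∫ x, w x ∂μ := by gcongr
    _ = a + c / (∫ x, w x ∂μ) * ∫ x, ‖x - x₀‖ ∂μ := by field_simp

end WeightedMean

theorem stmt6_general {d : ℕ} (μ : Measure (EuclideanSpace ℝ (Fin d))) [IsProbabilityMeasure μ]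
    (E : EuclideanSpace ℝ (Fin d) → ℝ)
    (xbar : EuclideanSpace ℝ (Fin d)) (hmin : ∀ x, E xbar ≤ E x)
    (η ν R₀ Einf : ℝ) (hη : 0 < η) (hν : 0 < ν)
    (hinv : ∀ x, (∀ k, |x k - xbar k| ≤ R₀) → η * ‖x - xbar‖ ≤ |E x - E xbar| ^ ν)
    (hfar : ∀ x, ¬ (∀ k, |x k - xbar k| ≤ R₀) → Einf < E x - E xbar)
    (q r : ℝ) (hq : 0 < q) (hqE : q ≤ Einf / 2)
    (hosc : ∀ x, (∀ k, |x k - xbar k| ≤ r) → |E x - E xbar| ≤ q)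
    (α : ℝ) (hα : 0 < α)
    (hmom : Integrable (fun x => ‖x‖) μ)
    (hintw : Integrable (fun x => Real.exp (-α * E x)) μ)
    (hintwx : Integrable (fun x => Real.exp (-α * E x) • x) μ)
    (Br : Set (EuclideanSpace ℝ (Fin d)))
    (hBr : Br = {x | ∀ k, |x k - xbar k| ≤ r})
    (hmass : 0 < μ Br)
    (Xα : EuclideanSpace ℝ (Fin d))
    (hXα : Xα = (∫ x, Real.exp (-α * E x) ∂μ)⁻¹ • ∫ x, Real.exp (-α * E x) • x ∂μ) :
    ‖xbar - Xα‖ ≤ (2 * q) ^ ν / η +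
      Real.exp (-α * q) / (μ Br).toReal * ∫ x, ‖x - xbar‖ ∂μ := by
  subst hXα
  set I := ∫ x, Real.exp (-α * E x) ∂μ
  have hw : 0 ≤ fun x => Real.exp (-α * E x) := fun x => (Real.exp_pos _).le
  have hB : 0 < μ.real Br := ENNReal.toReal_pos hmass.ne' (measure_ne_top μ _)
  have hIlb : Real.exp (-α * (E xbar + q)) * μ.real Br ≤ I :=
    exp_neg_mul_mul_measureReal_le_integral hα.le
      (hBr ▸ (isClosed_setOf_forall_abs_sub_le xbar r).measurableSet) (measure_ne_top μ _)
      (fun x hx => by rw [hBr] at hx; linarith [(abs_le.1 (hosc x hx)).2]) hintw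
  have hI : 0 < I := (mul_pos (Real.exp_pos _) hB).trans_le hIlb
  have htail : ∀ x, (2 * q) ^ ν / η < ‖x - xbar‖ →
      Real.exp (-α * E x) ≤ Real.exp (-α * (E xbar + 2 * q)) := fun x hx =>
    have := lt_sub_of_rpow_div_lt_norm_sub hη hν.le hmin hinv hfar (by linarith) hx
    Real.exp_le_exp.2 (by nlinarith)
  have hratio : Real.exp (-α * (E xbar + 2 * q)) / I ≤ Real.exp (-α * q) / μ.real Br := by
    rw [div_le_div_iff₀ hI hB]
    calc _ = Real.exp (-α * q) * (Real.exp (-α * (E xbar + q)) * μ.real Br) := by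
          rw [← mul_assoc, ← Real.exp_add]; ring_nf
      _ ≤ Real.exp (-α * q) * I := by gcongr
  have hmom' : Integrable (fun x => ‖x - xbar‖) μ :=
    (((integrable_norm_iff aestronglyMeasurable_id).1 hmom).sub (integrable_const xbar)).norm
  rw [← measureReal_def]
  calc _ ≤ (2 * q) ^ ν / η + Real.exp (-α * (E xbar + 2 * q)) / I * ∫ x, ‖x - xbar‖ ∂μ :=
        norm_sub_weightedMean_le_add hw hintw hintwx hI hmom'
          (div_nonneg (Real.rpow_nonneg (by positivity) ν) hη.le) (Real.exp_pos _).le htail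
    _ ≤ _ := by gcongr

theorem stmt6 {d : ℕ} (μ : Measure (EuclideanSpace ℝ (Fin d))) [IsProbabilityMeasure μ]
    (E : EuclideanSpace ℝ (Fin d) → ℝ) (hEc : Continuous E)
    (xbar : EuclideanSpace ℝ (Fin d)) (hmin : ∀ x, E xbar ≤ E x)
    (η ν R₀ Einf : ℝ) (hη : 0 < η) (hν : 0 < ν) (hR₀ : 0 < R₀) (hEinf : 0 < Einf)
    (hinv : ∀ x, (∀ k, |x k - xbar k| ≤ R₀) → η * ‖x - xbar‖ ≤ |E x - E xbar| ^ ν)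
    (hfar : ∀ x, ¬ (∀ k, |x k - xbar k| ≤ R₀) → Einf < E x - E xbar)
    (q r : ℝ) (hq : 0 < q) (hqE : q ≤ Einf / 2) (hr : 0 < r) (hrR : r ≤ R₀)
    (hosc : ∀ x, (∀ k, |x k - xbar k| ≤ r) → |E x - E xbar| ≤ q)
    (α : ℝ) (hα : 0 < α)
    (hmom : Integrable (fun x => ‖x‖) μ)
    (hintw : Integrable (fun x => Real.exp (-α * E x)) μ)
    (hintwx : Integrable (fun x => Real.exp (-α * E x) • x) μ)
    (Br : Set (EuclideanSpace ℝ (Fin d)))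
    (hBr : Br = {x | ∀ k, |x k - xbar k| ≤ r})
    (hmass : 0 < μ Br)
    (Xα : EuclideanSpace ℝ (Fin d))
    (hXα : Xα = (∫ x, Real.exp (-α * E x) ∂μ)⁻¹ • ∫ x, Real.exp (-α * E x) • x ∂μ) :
    ‖xbar - Xα‖ ≤ (2 * q) ^ ν / η +
      Real.exp (-α * q) / (μ Br).toReal * ∫ x, ‖x - xbar‖ ∂μ :=
  stmt6_general μ E xbar hmin η ν R₀ Einf hη hν hinv hfar q r hq hqE hosc α hα hmom hintw hintwx Br
    hBr hmass Xα hXα
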